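/- arXiv:2004.02548 — 6 statements merged into one kernel-verified Lean document; each statement's English description precedes it below -/
import Mathlib

section
/- Let A be a finite abelian group and B a proper subgroup of A. The centraliser of B in Aut(A) (that is, the set of automorphisms of A fixing every element of B) is trivial if and only if |B| is odd and |A| = 2|B|. -/
/-!
If `[A : B] = 2` and `α` fixes `B`, then `t = a⁻¹ α(a)` lies in `B` (as `a` and `α a` lie in the
same coset) and `t² = a⁻² α(a²) = 1`, so `t = 1` when `|B|` is odd.

Conversely, a nontrivial `f : A ⧸ B →* B` yields the nontrivial automorphism `a ↦ a · f(aB)`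
fixing `B`, and such an `f` exists as soon as `|B|` and `[A : B]` share a prime factor. So they are
coprime, and Schur–Zassenhaus gives `A = B × K` with `|K| = [A : B]`. Every automorphism of `K`
extends to one of `A` fixing `B`, hence `K` has no nontrivial automorphism. Then inversion is
trivial on `K`, and if `|K| > 2` the same transvection argument for `⟨x⟩ < K` with `x ≠ 1`
produces one; thus `[A : B] = 2` and `|B|` is odd.
-/

open Subgroup

lemma exists_monoidHom_zmod_ne_one (G : Type*) [CommGroup G] [Finite G] {p : ℕ} [Fact p.Prime]
    (hp : p ∣ Nat.card G) : ∃ χ : G →* Multiplicative (ZMod p), χ ≠ 1 := by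
  classical
  obtain ⟨ι, _, n, -, ⟨e⟩⟩ := CommGroup.equiv_prod_multiplicative_zmod_of_finite G
  have hcard : Nat.card G = ∏ i, n i := by
    simp only [Nat.card_congr e.toEquiv, Nat.card_pi, Nat.card_congr Multiplicative.toAdd,
      Nat.card_zmod]
  rw [hcard] at hp
  obtain ⟨i, -, hi⟩ := (Nat.Prime.prime Fact.out).exists_mem_finset_dvd hp
  let reduce : ZMod (n i) →+ ZMod p := (ZMod.castHom hi (ZMod p)).toAddMonoidHom
  refine ⟨(reduce.toMultiplicative.comp (Pi.evalMonoidHom _ i)).comp e.toMonoidHom, fun h => ?_⟩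
  have hone := DFunLike.congr_fun h (e.symm (Pi.mulSingle i (Multiplicative.ofAdd 1)))
  simp [reduce, ZMod.cast_one hi] at hone

lemma exists_monoidHom_ne_one_of_prime_dvd_card {G H : Type*} [CommGroup G] [Finite G] [Group H]
    [Finite H] {p : ℕ} (hp : p.Prime) (hG : p ∣ Nat.card G) (hH : p ∣ Nat.card H) :
    ∃ f : G →* H, f ≠ 1 := by
  have := Fact.mk hp
  obtain ⟨χ, hχ⟩ := exists_monoidHom_zmod_ne_one G hG
  obtain ⟨h, hh⟩ := exists_prime_orderOf_dvd_card' p hH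
  let e : Multiplicative (ZMod p) ≃* zpowers h :=
    mulEquivOfPrimeCardEq (p := p) (by simp) (by rw [Nat.card_zpowers, hh])
  refine ⟨((zpowers h).subtype.comp e.toMonoidHom).comp χ, fun hf => hχ ?_⟩
  ext x
  simpa using DFunLike.congr_fun hf x

section

variable {A : Type*} [CommGroup A]

def transvection (φ : A →* A) (hφ : φ.comp φ = 1) : A ≃* A where
  toFun a := a * φ a
  invFun a := a * (φ a)⁻¹
  left_inv a := by
    have : φ (φ a) = 1 := DFunLike.congr_fun hφ a
    simp [this]
  right_inv a := by
    have : φ (φ a) = 1 := DFunLike.congr_fun hφ a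
    simp [this]
  map_mul' a b := by
    simp only [map_mul]
    exact mul_mul_mul_comm a b (φ a) (φ b)

@[simp]
lemma transvection_apply (φ : A →* A) (hφ : φ.comp φ = 1) (a : A) :
    transvection φ hφ a = a * φ a := rfl

lemma coprime_card_index_of_forall_fixing_eq_refl [Finite A] (B : Subgroup A)
    (h : ∀ α : A ≃* A, (∀ b ∈ B, α b = b) → α = MulEquiv.refl A) :
    Nat.Coprime (Nat.card B) B.index := by
  by_contra hBA
  obtain ⟨p, hp, hpB⟩ := Nat.exists_prime_and_dvd hBA
  obtain ⟨f, hf⟩ := exists_monoidHom_ne_one_of_prime_dvd_card (G := A ⧸ B) (H := B) hp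
    (index_eq_card B ▸ hpB.trans (Nat.gcd_dvd_right _ _)) (hpB.trans (Nat.gcd_dvd_left _ _))
  let φ : A →* A := B.subtype.comp (f.comp (QuotientGroup.mk' B))
  have hφB : ∀ b ∈ B, φ b = 1 := fun b hb => by
    simp [φ, (QuotientGroup.eq_one_iff b).mpr hb]
  have hφφ : φ.comp φ = 1 := MonoidHom.ext fun a => hφB _ (f _).2
  have hα := h (transvection φ hφφ) fun b hb => by simp [hφB b hb]
  apply hf
  ext a
  simpa [φ] using DFunLike.congr_fun hα a

lemma forall_mulEquiv_eq_refl_of_isComplement' {B K : Subgroup A} (hBK : IsComplement' B K)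
    (h : ∀ α : A ≃* A, (∀ b ∈ B, α b = b) → α = MulEquiv.refl A) (γ : K ≃* K) :
    γ = MulEquiv.refl K := by
  let e : B × K ≃* A := MulEquiv.ofBijective (B.subtype.coprod K.subtype) hBK
  let α : A ≃* A := e.symm.trans (((MulEquiv.refl B).prodCongr γ).trans e)
  have hα_apply (b : B) (k : K) : α (b * k) = b * γ k := by
    change e ((MulEquiv.refl B).prodCongr γ (e.symm (e (b, k)))) = _
    rw [e.symm_apply_apply]
    rfl
  have hα := h α fun b hb => by simpa using hα_apply ⟨b, hb⟩ 1
  ext k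
  simpa [hα] using (hα_apply 1 k).symm

lemma card_le_two_of_forall_mulEquiv_eq_refl (C : Type*) [CommGroup C] [Finite C]
    (h : ∀ γ : C ≃* C, γ = MulEquiv.refl C) : Nat.card C ≤ 2 := by
  have hsq : ∀ x : C, x ^ 2 = 1 := fun x => by
    rw [sq, ← inv_mul_cancel x]
    congr 1
    exact (DFunLike.congr_fun (h (MulEquiv.inv C)) x).symm
  by_contra! hC
  have : Nontrivial C := Finite.one_lt_card_iff_nontrivial.mp (by omega)
  obtain ⟨x, hx⟩ := exists_ne (1 : C)
  have hxcard : Nat.card (zpowers x) = 2 := by rw [Nat.card_zpowers, orderOf_eq_prime (hsq x) hx]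
  obtain ⟨y, hy⟩ : ∃ y, y ∉ zpowers x := by
    by_contra! hall
    rw [(card_eq_iff_eq_top _).mpr (eq_top_iff.mpr fun y _ => hall y)] at hxcard
    omega
  have hidx : 2 ∣ (zpowers x).index := by
    have hy2 : orderOf (y : C ⧸ zpowers x) = 2 := orderOf_eq_prime
      (by rw [← QuotientGroup.mk_pow, hsq, QuotientGroup.mk_one])
      (mt (QuotientGroup.eq_one_iff y).mp hy)
    rw [index_eq_card, ← hy2]
    exact orderOf_dvd_natCard _
  have hcop := coprime_card_index_of_forall_fixing_eq_refl (zpowers x) fun α _ => h α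
  rw [hxcard] at hcop
  exact absurd (hcop.eq_one_of_dvd hidx) (by norm_num)

lemma odd_card_and_index_eq_two_of_forall_fixing_eq_refl [Finite A] {B : Subgroup A}
    (hB : B ≠ ⊤) (h : ∀ α : A ≃* A, (∀ b ∈ B, α b = b) → α = MulEquiv.refl A) :
    Odd (Nat.card B) ∧ B.index = 2 := by
  have hcop := coprime_card_index_of_forall_fixing_eq_refl B h
  obtain ⟨K, hK⟩ := exists_right_complement'_of_coprime hcop
  have hidx : B.index = 2 := by
    refine le_antisymm ?_ (one_lt_index_of_ne_top hB)
    rw [hK.symm.index_eq_card]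
    exact card_le_two_of_forall_mulEquiv_eq_refl K (forall_mulEquiv_eq_refl_of_isComplement' hK h)
  exact ⟨Nat.coprime_two_right.mp (hidx ▸ hcop), hidx⟩

lemma eq_refl_of_forall_fixing_of_odd_card_of_index_eq_two [Finite A] {B : Subgroup A}
    (hodd : Odd (Nat.card B)) (hidx : B.index = 2) (α : A ≃* A) (hα : ∀ b ∈ B, α b = b) :
    α = MulEquiv.refl A := by
  have hmem : ∀ a, α a ∈ B ↔ a ∈ B := fun a =>
    ⟨fun ha => α.injective (hα _ ha) ▸ ha, fun ha => (hα a ha).symm ▸ ha⟩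
  ext a
  set t := a⁻¹ * α a
  have ht : t ∈ B := (mul_mem_iff_of_index_two hidx).mpr (by rw [inv_mem_iff, hmem])
  have ht2 : t ^ 2 = 1 := by
    have ha2 : a ^ 2 ∈ B := hidx ▸ B.pow_index_mem a
    rw [mul_pow, ← map_pow, hα _ ha2, inv_pow, inv_mul_cancel]
  have hord : orderOf t = 1 :=
    (Nat.coprime_two_right.mpr hodd).coprime_dvd_left (B.orderOf_dvd_natCard ht)
      |>.coprime_dvd_right (orderOf_dvd_of_pow_eq_one ht2) |> (Nat.coprime_self _).mp
  exact (inv_mul_eq_one.mp (orderOf_eq_one_iff.mp hord)).symm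

end

theorem stmt2 {A : Type*} [CommGroup A] [Fintype A] (B : Subgroup A) (hB : B ≠ ⊤) :
    (∀ α : A ≃* A, (∀ b ∈ B, α b = b) → α = MulEquiv.refl A) ↔
      (Odd (Nat.card B) ∧ Nat.card A = 2 * Nat.card B) := by
  rw [← B.card_mul_index, mul_comm, Nat.mul_left_inj Nat.card_pos.ne']
  exact ⟨odd_card_and_index_eq_two_of_forall_fixing_eq_refl hB,
    fun ⟨hodd, hidx⟩ => eq_refl_of_forall_fixing_of_odd_card_of_index_eq_two hodd hidx⟩
end

section
/- Let p be a prime, G a nontrivial finite abelian p-group, and H a nontrivial proper subgroup of G. Then there exists a nontrivial automorphism of G that fixes every element of H. -/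
theorem stmt3 {p : ℕ} (hp : p.Prime) {G : Type*} [CommGroup G] [Fintype G]
    (hG : IsPGroup p G) (hGnt : 1 < Nat.card G) (H : Subgroup G)
    (hH : 1 < Nat.card H) (hHne : H ≠ ⊤) :
    ∃ α : G ≃* G, α ≠ MulEquiv.refl G ∧ ∀ h ∈ H, α h = h := by
  classical
  haveI : Fact p.Prime := ⟨hp⟩
  -- element of order p in H
  have hHp : IsPGroup p H := hG.to_subgroup H
  obtain ⟨n, hn⟩ := IsPGroup.iff_card.mp hHp
  have hn0 : n ≠ 0 := by
    rintro rfl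
    rw [pow_zero] at hn
    rw [hn] at hH
    omega
  have hpd : p ∣ Fintype.card H := by
    rw [← Nat.card_eq_fintype_card, hn]
    exact dvd_pow_self p hn0
  obtain ⟨z, hz⟩ := exists_prime_orderOf_dvd_card p hpd
  set zG : G := (z : G) with hzG
  have hzo : orderOf zG = p := (Subgroup.orderOf_coe z).trans hz
  have hzH : zG ∈ H := z.2
  -- maximal subgroup containing H
  obtain ⟨M, hM, hHM⟩ := (eq_top_or_exists_le_coatom H).resolve_left hHne
  haveI : M.Normal := Subgroup.normal_of_comm M
  obtain ⟨g₀, hg₀⟩ : ∃ g, g ∉ M := by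
    by_contra hcon
    push_neg at hcon
    exact hM.1 (Subgroup.eq_top_iff' M |>.mpr hcon)
  have hmkg₀ : (QuotientGroup.mk' M) g₀ ≠ 1 := by
    intro hcon
    exact hg₀ ((QuotientGroup.ker_mk' M) ▸ MonoidHom.mem_ker.mpr hcon)
  haveI : Nontrivial (G ⧸ M) := nontrivial_of_ne _ _ hmkg₀
  -- quotient is simple
  haveI : IsSimpleGroup (G ⧸ M) := by
    constructor
    intro N _
    have hsurj := QuotientGroup.mk'_surjective M
    have hMle : M ≤ N.comap (QuotientGroup.mk' M) := by
      intro x hx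
      simp only [Subgroup.mem_comap]
      have : (QuotientGroup.mk' M) x = 1 := by
        rw [← MonoidHom.mem_ker, QuotientGroup.ker_mk' M]; exact hx
      rw [this]; exact N.one_mem
    rcases hMle.lt_or_eq with hlt | heq
    · right
      have htop := hM.2 _ hlt
      calc N = (N.comap (QuotientGroup.mk' M)).map (QuotientGroup.mk' M) :=
              (Subgroup.map_comap_eq_self_of_surjective hsurj N).symm
        _ = ⊤ := by rw [htop, Subgroup.map_top_of_surjective _ hsurj]
    · left
      have h2 : N = ((N.comap (QuotientGroup.mk' M)).map (QuotientGroup.mk' M)) :=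
        (Subgroup.map_comap_eq_self_of_surjective hsurj N).symm
      rw [h2, ← heq]
      exact (Subgroup.map_eq_bot_iff M).mpr (le_of_eq (QuotientGroup.ker_mk' M).symm)
  -- card of quotient is p
  have hQp : IsPGroup p (G ⧸ M) := hG.to_quotient M
  have hcardQ : Nat.card (G ⧸ M) = p := by
    have hprime : (Nat.card (G ⧸ M)).Prime := IsSimpleGroup.prime_card
    obtain ⟨m, hm⟩ := IsPGroup.iff_card.mp hQp
    rw [hm] at hprime ⊢
    have hm0 : m ≠ 0 := by
      rintro rfl
      rw [pow_zero] at hprime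
      exact Nat.not_prime_one hprime
    rcases hprime.eq_one_or_self_of_dvd p (dvd_pow_self p hm0) with h1 | h2
    · exact absurd h1 hp.ne_one
    · exact h2.symm
  haveI : IsCyclic (G ⧸ M) := isCyclic_of_prime_card hcardQ
  haveI : NeZero (Nat.card (G ⧸ M)) := ⟨by rw [hcardQ]; exact hp.pos.ne'⟩
  have hzo' : orderOf zG = Nat.card (G ⧸ M) := by rw [hzo, hcardQ]
  -- ψ : Multiplicative (ZMod (card Q)) →* G, a ↦ zG ^ a.val
  let ψ : Multiplicative (ZMod (Nat.card (G ⧸ M))) →* G :=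
    { toFun := fun a => zG ^ (Multiplicative.toAdd a).val
      map_one' := by
        show zG ^ (0 : ZMod (Nat.card (G ⧸ M))).val = 1
        rw [ZMod.val_zero, pow_zero]
      map_mul' := by
        intro x y
        show zG ^ (Multiplicative.toAdd x + Multiplicative.toAdd y).val =
          zG ^ (Multiplicative.toAdd x).val * zG ^ (Multiplicative.toAdd y).val
        calc zG ^ (Multiplicative.toAdd x + Multiplicative.toAdd y).val
            = zG ^ (((Multiplicative.toAdd x).val + (Multiplicative.toAdd y).val)
                % orderOf zG) := by rw [ZMod.val_add, hzo']
          _ = zG ^ ((Multiplicative.toAdd x).val + (Multiplicative.toAdd y).val) :=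
              pow_mod_orderOf zG _
          _ = _ := pow_add zG _ _ }
  have hψ1 : ∀ a, ψ a = 1 → a = 1 := by
    intro a ha
    have hdvd : orderOf zG ∣ (Multiplicative.toAdd a).val := orderOf_dvd_of_pow_eq_one ha
    rw [hzo'] at hdvd
    have hval : (Multiplicative.toAdd a).val = 0 :=
      Nat.eq_zero_of_dvd_of_lt hdvd (ZMod.val_lt _)
    have h0 : Multiplicative.toAdd a = 0 := (ZMod.val_eq_zero _).mp hval
    exact toAdd_eq_zero.mp h0
  have hψmem : ∀ a, ψ a ∈ Subgroup.zpowers zG := by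
    intro a
    refine ⟨((Multiplicative.toAdd a).val : ℤ), ?_⟩
    show zG ^ ((Multiplicative.toAdd a).val : ℤ) = ψ a
    exact zpow_natCast zG _
  -- the homomorphism φ : G →* G
  let e := zmodCyclicMulEquiv (inferInstance : IsCyclic (G ⧸ M))
  let φ : G →* G := (ψ.comp e.symm.toMonoidHom).comp (QuotientGroup.mk' M)
  have hφM : ∀ g ∈ M, φ g = 1 := by
    intro g hg
    have h1 : (QuotientGroup.mk' M) g = 1 := by
      rw [← MonoidHom.mem_ker, QuotientGroup.ker_mk' M]; exact hg
    show ψ (e.symm ((QuotientGroup.mk' M) g)) = 1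
    rw [h1, map_one, map_one]
  have hφmem : ∀ g, φ g ∈ Subgroup.zpowers zG := fun g => hψmem _
  -- the automorphism
  let β : G →* G :=
    { toFun := fun g => g * φ g
      map_one' := by show (1 : G) * φ 1 = 1; rw [map_one, mul_one]
      map_mul' := by
        intro x y
        show (x * y) * φ (x * y) = (x * φ x) * (y * φ y)
        rw [map_mul, mul_mul_mul_comm] }
  have hzM : zG ∈ M := hHM hzH
  have hker : ∀ g, β g = 1 → g = 1 := by
    intro g hg
    have hg' : g * φ g = 1 := hg
    have hginv : g = (φ g)⁻¹ := eq_inv_of_mul_eq_one_left (by rwa [mul_comm] at hg')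
    have hgz : g ∈ Subgroup.zpowers zG := hginv ▸ (Subgroup.zpowers zG).inv_mem (hφmem g)
    have hgM : g ∈ M := by
      obtain ⟨k, hk⟩ := hgz
      exact hk ▸ Subgroup.zpow_mem M hzM k
    rw [hginv, hφM g hgM, inv_one]
  have hinj : Function.Injective β := (injective_iff_map_eq_one β).mpr hker
  have hbij : Function.Bijective β := Finite.injective_iff_bijective.mp hinj
  refine ⟨MulEquiv.ofBijective β hbij, ?_, ?_⟩
  · intro hcon
    have h' : (MulEquiv.ofBijective β hbij) g₀ = g₀ := by rw [hcon]; rfl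
    have hβg₀ : g₀ * φ g₀ = g₀ := h'
    have hφg₀ : φ g₀ = 1 := by
      calc φ g₀ = g₀⁻¹ * (g₀ * φ g₀) := by group
        _ = 1 := by rw [hβg₀]; group
    have he : e.symm ((QuotientGroup.mk' M) g₀) = 1 := hψ1 _ hφg₀
    have hone : (QuotientGroup.mk' M) g₀ = 1 := by
      have h2 := congrArg e he
      rwa [MulEquiv.apply_symm_apply, map_one] at h2
    exact hmkg₀ hone
  · intro h hh
    show h * φ h = h
    rw [hφM h (hHM hh), mul_one]
end

section
/- Let p be a prime. If G is a finite abelian p-group, H ≤ G a subgroup of index p, g ∈ G \ H, and h₀ ∈ H an element of order p, then the map sending ig + h to ig + i·h₀ + h (for i ∈ {0,...,p−1}, h ∈ H, writing G additively) is a well-defined automorphism of G fixing H pointwise, and it is nontrivial when h₀ ≠ 0. -/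
theorem stmt4 {p : ℕ} (hp : p.Prime) {G : Type*} [AddCommGroup G] [Fintype G]
    (hG : IsPGroup p (Multiplicative G)) (H : AddSubgroup G) (hidx : H.index = p)
    (g : G) (hg : g ∉ H) (h₀ : G) (hh₀ : h₀ ∈ H) (hord : addOrderOf h₀ = p) :
    ∃ α : G ≃+ G,
      (∀ i : ℕ, i < p → ∀ h ∈ H, α (i • g + h) = i • g + i • h₀ + h) ∧
      (∀ h ∈ H, α h = h) ∧
      (h₀ ≠ 0 → α ≠ AddEquiv.refl G) := by
  haveI : NeZero p := ⟨hp.ne_zero⟩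
  -- quotient map
  set q : G →+ G ⧸ H := QuotientAddGroup.mk' H with hq
  have hcard : Nat.card (G ⧸ H) = p := hidx ▸ rfl
  have hqg : q g ≠ 0 := by
    simpa [q, QuotientAddGroup.eq_zero_iff] using hg
  have hordqg : addOrderOf (q g) = p := by
    have h1 : addOrderOf (q g) ∣ p := hcard ▸ addOrderOf_dvd_natCard (q g)
    rcases (Nat.Prime.eq_one_or_self_of_dvd hp _ h1) with h | h
    · exact absurd (AddMonoid.addOrderOf_eq_one_iff.mp h) hqg
    · exact h
  have hpq : (zmultiplesHom (G ⧸ H) (q g)) (p : ℤ) = 0 := by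
    simp [zmultiplesHom_apply, ← hordqg, addOrderOf_nsmul_eq_zero]
  set e : ZMod p →+ G ⧸ H := ZMod.lift p ⟨zmultiplesHom (G ⧸ H) (q g), hpq⟩ with he
  have hinj : Function.Injective e := by
    rw [he, ZMod.lift_injective]
    intro m hm
    simp only [zmultiplesHom_apply] at hm
    have : (p : ℤ) ∣ m := by
      rwa [← hordqg, addOrderOf_dvd_iff_zsmul_eq_zero]
    exact (ZMod.intCast_zmod_eq_zero_iff_dvd m p).mpr this
  have hbij : Function.Bijective e :=
    (Nat.bijective_iff_injective_and_card e).mpr ⟨hinj, by simp [hcard]⟩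
  set E : ZMod p ≃+ G ⧸ H := AddEquiv.ofBijective e hbij with hE
  set f : G →+ ZMod p := E.symm.toAddMonoidHom.comp q with hf
  have hph₀ : (zmultiplesHom G h₀) (p : ℤ) = 0 := by
    simp [zmultiplesHom_apply, ← hord, addOrderOf_nsmul_eq_zero]
  set L : ZMod p →+ G := ZMod.lift p ⟨zmultiplesHom G h₀, hph₀⟩ with hL
  set ψ : G →+ G := L.comp f with hψ
  -- f vanishes on H
  have hfH : ∀ h ∈ H, f h = 0 := by
    intro h hh
    simp [hf, q, QuotientAddGroup.eq_zero_iff, hh]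
  have hψH : ∀ h ∈ H, ψ h = 0 := by
    intro h hh
    simp [hψ, hfH h hh]
  -- f g = 1
  have hfg : f g = 1 := by
    have : e 1 = q g := by
      have : ((1 : ℤ) : ZMod p) = 1 := by push_cast; ring
      rw [he, ← this, ZMod.lift_coe]
      simp
    have : E 1 = q g := this
    simp [hf, ← this]
  -- L of a natural cast
  have hLn : ∀ i : ℕ, L (i : ZMod p) = i • h₀ := by
    intro i
    have : ((i : ℤ) : ZMod p) = (i : ZMod p) := by push_cast; ring
    rw [← this, hL, ZMod.lift_coe]
    simp [zmultiplesHom_apply]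
  -- ψ maps into H
  have hψmem : ∀ x, ψ x ∈ H := by
    intro x
    have : ψ x = L (f x) := rfl
    rw [this, ← ZMod.natCast_rightInverse (f x), hLn]
    exact nsmul_mem hh₀ _
  have hψψ : ∀ x, ψ (ψ x) = 0 := fun x => hψH _ (hψmem x)
  refine ⟨{ toFun := fun x => x + ψ x
            invFun := fun x => x - ψ x
            left_inv := fun x => by simp [map_add, hψψ x]
            right_inv := fun x => by simp [map_sub, hψψ x]
            map_add' := fun x y => by simp [map_add]; abel }, ?_, ?_, ?_⟩
  · intro i _ h hh
    have : ψ (i • g + h) = i • h₀ := by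
      have : f (i • g + h) = (i : ZMod p) := by
        simp [map_add, map_nsmul, hfg, hfH h hh]
      simp only [hψ, AddMonoidHom.comp_apply, this, hLn]
    simp only [AddEquiv.coe_mk, Equiv.coe_fn_mk, this]
    abel
  · intro h hh
    simp [hψH h hh]
  · intro hne hcontra
    have : g + ψ g = g := congrArg (fun (α : G ≃+ G) => α g) hcontra
    have hψg : ψ g = h₀ := by
      simp only [hψ, AddMonoidHom.comp_apply, hfg]
      have := hLn 1
      simpa using this
    rw [hψg] at this
    exact hne (by simpa using this)
end

section
/- Let p be a prime and A = ℤ/p^{e₁} × ⋯ × ℤ/p^{e_r} with e₁ ≥ ⋯ ≥ e_r ≥ 1 a finite abelian p-group, and let B ≤ A be an elementary abelian subgroup of rank s. Then there exists a basis (a₁,...,a_r) of A and indices 1 ≤ i₁ < ⋯ < i_s ≤ r such that (p^{e_{i₁}−1} a_{i₁}, ..., p^{e_{i_s}−1} a_{i_s}) is a basis of B. -/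
/-- `a : Fin r → A` is a basis (with order exponents `e`) of the subgroup `B` of the
abelian `p`-group `A`: the entries have orders `p ^ e i` and every element of `B` is a
unique combination `∑ i, c i • a i` with `c i` taken modulo `p ^ e i`. -/
def IsPBasis (p : ℕ) {A : Type*} [AddCommGroup A] {r : ℕ} (e : Fin r → ℕ)
    (a : Fin r → A) (B : AddSubgroup A) : Prop :=
  (∀ i, addOrderOf (a i) = p ^ e i) ∧
  Function.Injective (fun c : (∀ i, ZMod (p ^ e i)) => ∑ i, (c i).val • a i) ∧
  Set.range (fun c : (∀ i, ZMod (p ^ e i)) => ∑ i, (c i).val • a i) = (B : Set A)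

theorem nsmul_congr_mod {A : Type*} [AddCommGroup A] {a : A} {n : ℕ} (h : n • a = 0)
    {m m' : ℕ} (hmm : m ≡ m' [MOD n]) : m • a = m' • a := by
  have h1 : ∀ m : ℕ, (m % n) • a = m • a := fun m => by
    conv_rhs => rw [← Nat.mod_add_div m n]
    rw [add_nsmul, mul_nsmul, h, smul_zero, add_zero]
  rw [← h1 m, ← h1 m', hmm]

theorem nsmul_eq_zero_of_dvd {A : Type*} [AddCommGroup A] {a : A} {n m : ℕ} (h : n • a = 0)
    (hd : n ∣ m) : m • a = 0 := by
  obtain ⟨k, rfl⟩ := hd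
  rw [mul_nsmul, h, smul_zero]

/-- the hom `ZMod n →+ A` sending `1` to an element killed by `n`. -/
def zsh (n : ℕ) {A : Type*} [AddCommGroup A] (a : A) (h : n • a = 0) : ZMod n →+ A :=
  ZMod.lift n ⟨zmultiplesHom A a, by rw [zmultiplesHom_apply, natCast_zsmul, h]⟩

theorem zsh_natCast (n : ℕ) {A : Type*} [AddCommGroup A] (a : A) (h : n • a = 0) (m : ℕ) :
    zsh n a h (m : ZMod n) = m • a := by
  rw [show ((m:ℕ) : ZMod n) = ((m:ℤ) : ZMod n) by push_cast; rfl, zsh, ZMod.lift_coe,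
    zmultiplesHom_apply, natCast_zsmul]

theorem zsh_apply (n : ℕ) [NeZero n] {A : Type*} [AddCommGroup A] (a : A) (h : n • a = 0)
    (x : ZMod n) : zsh n a h x = x.val • a := by
  conv_lhs => rw [← ZMod.natCast_rightInverse x]
  rw [zsh_natCast]

def comboHom (p : ℕ) {A : Type*} [AddCommGroup A] {r : ℕ} (e : Fin r → ℕ)
    (a : Fin r → A) (h : ∀ i, (p ^ e i) • a i = 0) : (∀ i, ZMod (p ^ e i)) →+ A :=
  ∑ i : Fin r, ((zsh (p ^ e i) (a i) (h i)).comp (Pi.evalAddMonoidHom _ i))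

theorem comboHom_apply (p : ℕ) [NeZero p] {A : Type*} [AddCommGroup A] {r : ℕ} (e : Fin r → ℕ)
    (a : Fin r → A) (h : ∀ i, (p ^ e i) • a i = 0) (c : ∀ i, ZMod (p ^ e i)) :
    comboHom p e a h c = ∑ i, (c i).val • a i := by
  rw [comboHom, AddMonoidHom.finset_sum_apply]
  refine Finset.sum_congr rfl fun i _ => ?_
  have : NeZero (p ^ e i) := ⟨pow_ne_zero _ (NeZero.ne p)⟩
  rw [AddMonoidHom.comp_apply, Pi.evalAddMonoidHom_apply, zsh_apply]

theorem IsPBasis.torsion {p : ℕ} {A : Type*} [AddCommGroup A] {r : ℕ} {e : Fin r → ℕ}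
    {a : Fin r → A} {B : AddSubgroup A} (h : IsPBasis p e a B) (i : Fin r) :
    p ^ e i • a i = 0 := by
  rw [← h.1 i]; exact addOrderOf_nsmul_eq_zero _

theorem combo_funeq (p : ℕ) [NeZero p] {A : Type*} [AddCommGroup A] {r : ℕ} {e : Fin r → ℕ}
    {a : Fin r → A} (h : ∀ i, p ^ e i • a i = 0) :
    (fun c : (∀ i, ZMod (p ^ e i)) => ∑ i, (c i).val • a i) = ⇑(comboHom p e a h) :=
  funext fun c => (comboHom_apply p e a h c).symm

theorem IsPBasis.equivMap {p : ℕ} [NeZero p] {A A' : Type*} [AddCommGroup A] [AddCommGroup A']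
    {r : ℕ} {e : Fin r → ℕ} {a : Fin r → A} {B : AddSubgroup A}
    (h : IsPBasis p e a B) (φ : A ≃+ A') :
    IsPBasis p e (⇑φ ∘ a) (B.map φ.toAddMonoidHom) := by
  obtain ⟨ho, hinj, hr⟩ := h
  have hfun : (fun c : (∀ i, ZMod (p ^ e i)) => ∑ i, (c i).val • (⇑φ ∘ a) i)
      = ⇑φ ∘ (fun c : (∀ i, ZMod (p ^ e i)) => ∑ i, (c i).val • a i) := by
    funext c; simp [map_sum]
  refine ⟨fun i => ?_, ?_, ?_⟩
  · rw [Function.comp_apply, ← ho i]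
    exact addOrderOf_injective φ.toAddMonoidHom φ.injective (a i)
  · rw [hfun]; exact φ.injective.comp hinj
  · rw [hfun, Set.range_comp, hr, AddSubgroup.coe_map, AddEquiv.coe_toAddMonoidHom]

theorem isPBasis_single (p : ℕ) [hp1 : Fact (1 < p)] {r : ℕ} (e : Fin r → ℕ) :
    IsPBasis p e (fun i => Pi.single i 1) (⊤ : AddSubgroup (∀ i, ZMod (p ^ e i))) := by
  have hfun : (fun c : (∀ i, ZMod (p ^ e i)) => ∑ i, (c i).val • Pi.single i (1 : ZMod (p ^ e i))) = id := by
    funext c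
    funext j
    have : NeZero (p ^ e j) := ⟨pow_ne_zero _ (by have := hp1.out; omega : p ≠ 0)⟩
    rw [Finset.sum_apply, Finset.sum_eq_single j]
    · rw [Pi.smul_apply, Pi.single_eq_same, nsmul_eq_mul, mul_one, ZMod.natCast_rightInverse]
      rfl
    · intro i _ hij
      rw [Pi.smul_apply, Pi.single_eq_of_ne (Ne.symm hij), smul_zero]
    · intro hj; exact absurd (Finset.mem_univ j) hj
  refine ⟨fun i => ?_, ?_, ?_⟩
  · have : NeZero (p ^ e i) := ⟨pow_ne_zero _ (by have := hp1.out; omega : p ≠ 0)⟩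
    set x : ∀ j, ZMod (p ^ e j) := Pi.single i 1 with hx
    have key : ∀ n : ℕ, n • x = 0 ↔ n • (1 : ZMod (p ^ e i)) = 0 := by
      intro n
      constructor
      · intro hn
        have := congrFun hn i
        rwa [Pi.smul_apply, hx, Pi.single_eq_same, Pi.zero_apply] at this
      · intro hn
        funext j
        by_cases hji : j = i
        · subst hji; rw [Pi.smul_apply, hx, Pi.single_eq_same, Pi.zero_apply]; exact hn
        · rw [Pi.smul_apply, hx, Pi.single_eq_of_ne hji, smul_zero, Pi.zero_apply]
    have t1 : (p ^ e i) • x = 0 :=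
      (key _).2 (by rw [nsmul_eq_mul, mul_one, ZMod.natCast_self])
    have t2 : (p ^ e i) ∣ addOrderOf x := by
      rw [← ZMod.addOrderOf_one (p ^ e i)]
      exact addOrderOf_dvd_of_nsmul_eq_zero ((key _).1 (addOrderOf_nsmul_eq_zero x))
    show addOrderOf x = p ^ e i
    exact Nat.dvd_antisymm (addOrderOf_dvd_of_nsmul_eq_zero t1) t2
  · rw [hfun]; exact fun x y hxy => hxy
  · rw [hfun, Set.range_id, AddSubgroup.coe_top]

theorem zmod_ptorsion {p : ℕ} (hp : p.Prime) {e : ℕ} (he : 1 ≤ e) {x : ZMod (p ^ e)}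
    (hx : p • x = 0) : ∃ t : ℕ, t < p ∧ x = ((t * p ^ (e - 1) : ℕ) : ZMod (p ^ e)) := by
  have : NeZero (p ^ e) := ⟨pow_ne_zero _ hp.pos.ne'⟩
  have h1 : ((p * x.val : ℕ) : ZMod (p ^ e)) = 0 := by
    push_cast
    rw [ZMod.natCast_rightInverse x, ← nsmul_eq_mul]
    exact hx
  have hdvd : p ^ e ∣ p * x.val := (ZMod.natCast_eq_zero_iff _ _).1 h1
  have hpe : p ^ e = p * p ^ (e - 1) := by
    conv_lhs => rw [show e = (e - 1) + 1 by omega]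
    rw [pow_succ]; ring
  have hdvd2 : p ^ (e - 1) ∣ x.val := by
    have h3 : p * p ^ (e - 1) ∣ p * x.val := by rw [← hpe]; exact hdvd
    exact (mul_dvd_mul_iff_left hp.pos.ne').1 h3
  refine ⟨x.val / p ^ (e - 1), ?_, ?_⟩
  · rw [Nat.div_lt_iff_lt_mul (pow_pos hp.pos _), ← hpe]
    exact x.val_lt
  · rw [Nat.div_mul_cancel hdvd2, ZMod.natCast_rightInverse x]

theorem zmod_ptorsion_smul {p : ℕ} (hp : p.Prime) {e : ℕ} (he : 1 ≤ e) {u v : ZMod (p ^ e)}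
    (hu : p • u = 0) (hv : p • v = 0) (hv0 : v ≠ 0) : ∃ d : ℕ, d • v = u := by
  haveI : Fact p.Prime := ⟨hp⟩
  have : NeZero (p ^ e) := ⟨pow_ne_zero _ hp.pos.ne'⟩
  obtain ⟨t, ht, hu'⟩ := zmod_ptorsion hp he hu
  obtain ⟨c, hc, hv'⟩ := zmod_ptorsion hp he hv
  have hc0 : c ≠ 0 := by
    rintro rfl
    simp at hv'
    exact hv0 hv'
  have hcp : (c : ZMod p) ≠ 0 := by
    rw [Ne, ZMod.natCast_eq_zero_iff]
    exact fun hd => hc0 (Nat.eq_zero_of_dvd_of_lt hd hc ▸ rfl)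
  refine ⟨((t : ZMod p) * (c : ZMod p)⁻¹).val, ?_⟩
  have hpe : p ^ e = p * p ^ (e - 1) := by
    conv_lhs => rw [show e = (e - 1) + 1 by omega]
    rw [pow_succ]; ring
  set d := ((t : ZMod p) * (c : ZMod p)⁻¹).val with hd
  have hmod : d * c ≡ t [MOD p] := by
    rw [← ZMod.natCast_eq_natCast_iff]
    push_cast
    rw [hd, ZMod.natCast_rightInverse, mul_assoc, inv_mul_cancel₀ hcp, mul_one]
  have hmod2 : d * c * p ^ (e - 1) ≡ t * p ^ (e - 1) [MOD p ^ e] := by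
    rw [hpe]
    exact Nat.ModEq.mul_right' (p ^ (e-1)) hmod
  rw [hu', hv', nsmul_eq_mul, ← Nat.cast_mul, ZMod.natCast_eq_natCast_iff]
  calc d * (c * p ^ (e - 1)) = d * c * p ^ (e - 1) := by ring
  _ ≡ t * p ^ (e - 1) [MOD p ^ e] := hmod2

theorem combo_single {p : ℕ} (hp : 1 < p) {A : Type*} [AddCommGroup A] {r : ℕ} {e : Fin r → ℕ}
    (h1 : ∀ i, 1 ≤ e i) (b : Fin r → A) (k : Fin r) (x : ZMod (p ^ e k)) :
    ∑ j, ((Pi.single k x : ∀ j, ZMod (p ^ e j)) j).val • b j = x.val • b k := by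
  rw [Finset.sum_eq_single k]
  · rw [Pi.single_eq_same]
  · intro j _ hjk
    have : NeZero (p ^ e j) := ⟨pow_ne_zero _ (by omega)⟩
    rw [Pi.single_eq_of_ne hjk, ZMod.val_zero, zero_smul]
  · intro hk; exact absurd (Finset.mem_univ k) hk

theorem IsPBasis.mem {p : ℕ} (hp : 1 < p) {A : Type*} [AddCommGroup A] {r : ℕ} {e : Fin r → ℕ}
    {b : Fin r → A} {B : AddSubgroup A} (h1 : ∀ i, 1 ≤ e i) (h : IsPBasis p e b B) (k : Fin r) :
    b k ∈ B := by
  have hlt : Fact (1 < p ^ e k) := ⟨Nat.one_lt_pow (by have := h1 k; omega) hp⟩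
  have key := combo_single hp h1 b k (1 : ZMod (p ^ e k))
  rw [ZMod.val_one, one_smul] at key
  rw [← SetLike.mem_coe, ← h.2.2]
  exact ⟨Pi.single k 1, key⟩

theorem IsPBasis.elem_torsion {p : ℕ} {A : Type*} [AddCommGroup A] {s : ℕ}
    {b : Fin s → A} {B : AddSubgroup A} (h : IsPBasis p (fun _ => 1) b B) :
    ∀ x ∈ B, p • x = 0 := by
  have hb1 : ∀ k, p • b k = 0 := fun k => by
    have := h.torsion k; rwa [pow_one] at this
  intro x hx
  rw [← SetLike.mem_coe, ← h.2.2] at hx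
  obtain ⟨c, rfl⟩ := hx
  simp only
  rw [Finset.smul_sum]
  refine Finset.sum_eq_zero fun k _ => ?_
  rw [smul_comm, hb1, smul_zero]

theorem IsPBasis.perm {p : ℕ} {A : Type*} [AddCommGroup A] {s : ℕ}
    {b : Fin s → A} {B : AddSubgroup A} (h : IsPBasis p (fun _ => 1) b B)
    (σ : Equiv.Perm (Fin s)) : IsPBasis p (fun _ => 1) (b ∘ σ) B := by
  obtain ⟨ho, hinj, hr⟩ := h
  have hfun : (fun c : (∀ k : Fin s, ZMod (p ^ 1)) => ∑ k, (c k).val • (b ∘ σ) k)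
      = (fun c : (∀ k : Fin s, ZMod (p ^ 1)) => ∑ k, (c k).val • b k) ∘
        (fun c k => c (σ.symm k)) := by
    funext c
    exact Fintype.sum_equiv σ _ _ (fun k => by simp)
  refine ⟨fun k => ho (σ k), ?_, ?_⟩
  · rw [hfun]
    refine hinj.comp fun c c' hcc => ?_
    funext k
    have h2 := congrFun hcc (σ k)
    rwa [Equiv.symm_apply_apply] at h2
  · rw [hfun, Function.Surjective.range_comp, hr]
    intro c
    exact ⟨fun k => c (σ k), funext fun k => by simp⟩

theorem nsmul_left_cancel {A : Type*} [AddCommGroup A] {y : A} {m m' : ℕ}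
    (h : m • y = m' • y) (hm : m < addOrderOf y) (hm' : m' < addOrderOf y) : m = m' := by
  have key : ∀ a b : ℕ, a ≤ b → a • y = b • y → b < addOrderOf y → a = b := by
    intro a b hab hy hb
    have h0 : (b - a) • y = 0 := by
      obtain ⟨k, rfl⟩ := Nat.exists_eq_add_of_le hab
      rw [Nat.add_sub_cancel_left]
      rw [add_nsmul] at hy
      have := hy.symm
      nth_rewrite 2 [← add_zero (a • y)] at this
      exact add_left_cancel this
    have hd := addOrderOf_dvd_of_nsmul_eq_zero h0
    have : b - a = 0 := by
      rcases Nat.eq_zero_or_pos (b - a) with h' | h'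
      · exact h'
      · exact absurd (Nat.le_of_dvd h' hd) (by omega)
    omega
  rcases le_total m m' with hle | hle
  · exact key m m' hle h hm'
  · exact (key m' m hle h.symm hm).symm

def cut {p r : ℕ} {e : Fin r → ℕ} (B : AddSubgroup (∀ i, ZMod (p ^ e i))) (i₀ : Fin r) :
    AddSubgroup (∀ i, ZMod (p ^ e i)) :=
  B ⊓ (Pi.evalAddMonoidHom _ i₀).ker

theorem mem_cut {p r : ℕ} {e : Fin r → ℕ} {B : AddSubgroup (∀ i, ZMod (p ^ e i))} {i₀ : Fin r}
    {x : ∀ i, ZMod (p ^ e i)} : x ∈ cut B i₀ ↔ x ∈ B ∧ x i₀ = 0 := by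
  simp [cut, AddSubgroup.mem_inf, AddMonoidHom.mem_ker]

theorem val_natCast_nsmul {p : ℕ} [NeZero p] {A : Type*} [AddCommGroup A] {y : A}
    (hy : p • y = 0) (d : ℕ) : ((d : ZMod p)).val • y = d • y := by
  rw [ZMod.val_natCast]
  exact nsmul_congr_mod hy (Nat.mod_modEq d p)

theorem assemble {p : ℕ} (hp : p.Prime) {r : ℕ} {e : Fin r → ℕ} (h1 : ∀ i, 1 ≤ e i)
    {s : ℕ} (B : AddSubgroup (∀ i, ZMod (p ^ e i))) (i₀ : Fin r)
    (β : Fin s → ∀ i, ZMod (p ^ e i)) (z : ∀ i, ZMod (p ^ e i))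
    (hβ : IsPBasis p (fun _ => 1) β (cut B i₀))
    (hz : z ∈ B) (hz2 : p • z = 0) (hz3 : z i₀ ≠ 0)
    (hBtor : ∀ x ∈ B, p • x = 0) :
    IsPBasis p (fun _ => 1) (Fin.snoc β z) B := by
  haveI : Fact p.Prime := ⟨hp⟩
  haveI : NeZero (p ^ 1) := ⟨by have := hp.one_lt; positivity⟩
  have hz0 : z ≠ 0 := fun h => hz3 (by rw [h]; rfl)
  have hzi : p • z i₀ = 0 := by
    have := congrFun hz2 i₀
    rwa [Pi.smul_apply, Pi.zero_apply] at this
  have hordz : addOrderOf (z i₀) = p := addOrderOf_eq_prime hzi hz3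
  have hβmem : ∀ d : (∀ k : Fin s, ZMod (p ^ 1)),
      (∑ k, (d k).val • β k) ∈ cut B i₀ := fun d => by
    have : (∑ k, (d k).val • β k) ∈ Set.range
        (fun c : (∀ k : Fin s, ZMod (p ^ 1)) => ∑ k, (c k).val • β k) := ⟨d, rfl⟩
    rw [hβ.2.2] at this
    exact this
  have hsplit : ∀ c : (∀ k : Fin (s+1), ZMod (p ^ 1)),
      ∑ k, (c k).val • Fin.snoc β z k
      = (∑ k : Fin s, (c k.castSucc).val • β k) + (c (Fin.last s)).val • z := by
    intro c
    rw [Fin.sum_univ_castSucc]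
    simp [Fin.snoc_castSucc, Fin.snoc_last]
  refine ⟨?_, ?_, ?_⟩
  · intro k
    refine Fin.lastCases ?_ ?_ k
    · simp only [Fin.snoc_last]
      rw [pow_one]
      exact addOrderOf_eq_prime hz2 hz0
    · intro k'
      simpa [Fin.snoc_castSucc] using hβ.1 k'
  · intro c c' hcc
    simp only [hsplit] at hcc
    have hxs : (∑ k : Fin s, (c k.castSucc).val • β k) i₀ = 0 :=
      (mem_cut.1 (hβmem fun k => c k.castSucc)).2
    have hxs' : (∑ k : Fin s, (c' k.castSucc).val • β k) i₀ = 0 :=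
      (mem_cut.1 (hβmem fun k => c' k.castSucc)).2
    have hcoord := congrFun hcc i₀
    rw [Pi.add_apply, Pi.add_apply, Pi.smul_apply, Pi.smul_apply, hxs, hxs',
      zero_add, zero_add] at hcoord
    have hval : (c (Fin.last s)).val = (c' (Fin.last s)).val := by
      refine nsmul_left_cancel hcoord ?_ ?_ <;>
        · rw [hordz]
          exact lt_of_lt_of_eq (ZMod.val_lt _) (pow_one p)
    have hlast : c (Fin.last s) = c' (Fin.last s) := ZMod.val_injective _ hval
    rw [hlast] at hcc
    have hsum : (∑ k : Fin s, (c k.castSucc).val • β k)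
        = ∑ k : Fin s, (c' k.castSucc).val • β k := add_right_cancel hcc
    have hind := hβ.2.1 hsum
    funext k
    refine Fin.lastCases hlast (fun k' => ?_) k
    exact congrFun hind k'
  · apply subset_antisymm
    · rintro x ⟨c, rfl⟩
      simp only [hsplit]
      exact AddSubgroup.add_mem B (mem_cut.1 (hβmem fun k => c k.castSucc)).1
        (AddSubgroup.nsmul_mem B hz _)
    · intro y hyB
      have hytor : p • y = 0 := hBtor y hyB
      have hyi : p • y i₀ = 0 := by
        have := congrFun hytor i₀
        rwa [Pi.smul_apply, Pi.zero_apply] at this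
      obtain ⟨d, hd⟩ := zmod_ptorsion_smul hp (h1 i₀) hyi hzi hz3
      have hy' : y - d • z ∈ cut B i₀ := by
        rw [mem_cut]
        refine ⟨AddSubgroup.sub_mem B hyB (AddSubgroup.nsmul_mem B hz _), ?_⟩
        rw [Pi.sub_apply, Pi.smul_apply, hd, sub_self]
      rw [← SetLike.mem_coe, ← hβ.2.2] at hy'
      obtain ⟨c', hc'⟩ := hy'
      have hc'' : (∑ k, (c' k).val • β k) = y - d • z := hc'
      have h2' : ((d : ZMod (p ^ 1))).val • z = d • z :=
        val_natCast_nsmul (by rw [pow_one]; exact hz2) d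
      have hgoal : ∑ k, ((Fin.snoc c' (d : ZMod (p ^ 1)) : ∀ _ : Fin (s+1), ZMod (p ^ 1)) k).val
          • Fin.snoc β z k = y := by
        rw [hsplit]
        simp only [Fin.snoc_castSucc, Fin.snoc_last]
        rw [h2', hc'', sub_add_cancel]
      exact ⟨_, hgoal⟩

theorem subbasis {p : ℕ} (hp : p.Prime) {r : ℕ} {e : Fin r → ℕ} (h1 : ∀ i, 1 ≤ e i)
    {s : ℕ} (B : AddSubgroup (∀ i, ZMod (p ^ e i))) (i₀ : Fin r)
    (b : Fin (s+1) → ∀ i, ZMod (p ^ e i))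
    (hb : IsPBasis p (fun _ => 1) b B) (hlast : b (Fin.last s) i₀ ≠ 0) :
    ∃ b' : Fin s → ∀ i, ZMod (p ^ e i), IsPBasis p (fun _ => 1) b' (cut B i₀) := by
  haveI : Fact p.Prime := ⟨hp⟩
  haveI : NeZero p := ⟨hp.pos.ne'⟩
  haveI : Fact (1 < p ^ 1) := ⟨by rw [pow_one]; exact hp.one_lt⟩
  have btor : ∀ k, p • b k = 0 := fun k => by
    have := hb.torsion k; rwa [pow_one] at this
  have btor1 : ∀ k : Fin (s+1), (p ^ (1:ℕ)) • b k = 0 := fun k => by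
    rw [pow_one]; exact btor k
  set F := comboHom p (fun _ : Fin (s+1) => 1) b btor1 with hF
  have hFfun := combo_funeq p (a := b) btor1
  have hFinj : Function.Injective ⇑F := by rw [← hFfun]; exact hb.2.1
  have hFr : Set.range ⇑F = (B : Set _) := by rw [← hFfun]; exact hb.2.2
  have hFsingle : ∀ (j : Fin (s+1)) (x : ZMod (p ^ (1:ℕ))),
      F (Pi.single j x) = x.val • b j := fun j x => by
    rw [comboHom_apply]
    exact combo_single hp.one_lt (fun _ => le_refl 1) b j x
  have btori : ∀ k, p • (b k i₀) = 0 := fun k => by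
    have := congrFun (btor k) i₀
    rwa [Pi.smul_apply, Pi.zero_apply] at this
  choose d hd using fun k : Fin s =>
    zmod_ptorsion_smul hp (h1 i₀) (btori k.castSucc) (btori (Fin.last s)) hlast
  set b' : Fin s → ∀ i, ZMod (p ^ e i) :=
    fun k => b k.castSucc - d k • b (Fin.last s) with hb'
  have hb'B : ∀ k, b' k ∈ cut B i₀ := fun k => by
    rw [mem_cut]
    constructor
    · exact AddSubgroup.sub_mem B (hb.mem hp.one_lt (fun _ => le_refl 1) _)
        (AddSubgroup.nsmul_mem B (hb.mem hp.one_lt (fun _ => le_refl 1) _) _)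
    · show (b k.castSucc - d k • b (Fin.last s)) i₀ = 0
      rw [Pi.sub_apply, Pi.smul_apply, hd k, sub_self]
  have hb'k : ∀ k, b' k = b k.castSucc - d k • b (Fin.last s) := fun _ => rfl
  have b'tor : ∀ k, p • b' k = 0 := fun k => by
    rw [hb'k k, smul_sub, btor, smul_comm, btor, smul_zero, sub_zero]
  have b'tor1 : ∀ k : Fin s, (p ^ (1:ℕ)) • b' k = 0 := fun k => by
    rw [pow_one]; exact b'tor k
  set F' := comboHom p (fun _ : Fin s => 1) b' b'tor1 with hF'
  have hF'fun := combo_funeq p (a := b') b'tor1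
  -- the extension map
  set ext : (∀ _ : Fin s, ZMod (p ^ (1:ℕ))) → (∀ _ : Fin (s+1), ZMod (p ^ (1:ℕ))) :=
    fun c => Fin.snoc c (-∑ k, (d k : ZMod (p ^ (1:ℕ))) * c k) with hext
  have hext_last : ∀ c' : ∀ _ : Fin s, ZMod (p ^ (1:ℕ)),
      ext c' (Fin.last s) = -∑ k, (d k : ZMod (p ^ (1:ℕ))) * c' k := fun c' => by
    show (Fin.snoc c' (-∑ k, (d k : ZMod (p ^ (1:ℕ))) * c' k)
      : ∀ _ : Fin (s+1), ZMod (p ^ (1:ℕ))) (Fin.last s) = _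
    rw [Fin.snoc_last]
  have hext_cast : ∀ (c' : ∀ _ : Fin s, ZMod (p ^ (1:ℕ))) (k : Fin s),
      ext c' k.castSucc = c' k := fun c' k => by
    show (Fin.snoc c' (-∑ k, (d k : ZMod (p ^ (1:ℕ))) * c' k)
      : ∀ _ : Fin (s+1), ZMod (p ^ (1:ℕ))) k.castSucc = _
    rw [Fin.snoc_castSucc]
  have key1 : ∀ c, F (ext c) = F' c := by
    intro c
    have e1 : F (ext c) = (∑ k : Fin s, (c k).val • b k.castSucc)
        + ((-∑ k, (d k : ZMod (p ^ (1:ℕ))) * c k : ZMod (p ^ (1:ℕ)))).val • b (Fin.last s) := by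
      rw [comboHom_apply, Fin.sum_univ_castSucc]
      simp only [hext, Fin.snoc_castSucc, Fin.snoc_last]
    have e2 : F' c = (∑ k : Fin s, (c k).val • b k.castSucc)
        - (∑ k, (c k).val * d k) • b (Fin.last s) := by
      have e2a : ∀ k : Fin s, (c k).val • b' k
          = (c k).val • b k.castSucc - ((c k).val * d k) • b (Fin.last s) := fun k => by
        rw [hb'k k, smul_sub, smul_smul]
      rw [comboHom_apply, Finset.sum_congr rfl fun k _ => e2a k, Finset.sum_sub_distrib,
        ← Finset.sum_smul]
    have h0 : (((-∑ k, (d k : ZMod (p ^ (1:ℕ))) * c k : ZMod (p ^ (1:ℕ)))).val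
        + ∑ k, (c k).val * d k) • b (Fin.last s) = 0 := by
      refine nsmul_eq_zero_of_dvd (btor (Fin.last s)) ?_
      have : (((((-∑ k, (d k : ZMod (p ^ (1:ℕ))) * c k : ZMod (p ^ (1:ℕ)))).val
          + ∑ k, (c k).val * d k : ℕ)) : ZMod (p ^ (1:ℕ))) = 0 := by
        push_cast
        rw [ZMod.natCast_rightInverse]
        have : ∀ k : Fin s, (((c k).val : ZMod (p ^ (1:ℕ)))) = c k := fun k =>
          ZMod.natCast_rightInverse _
        simp only [this]
        rw [neg_add_eq_zero]
        exact Finset.sum_congr rfl fun k _ => mul_comm _ _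
      have hdvd := (ZMod.natCast_eq_zero_iff _ (p ^ 1)).1 this
      exact (dvd_pow_self p one_ne_zero).trans hdvd
    rw [e1, e2]
    rw [add_nsmul] at h0
    have : ((-∑ k, (d k : ZMod (p ^ (1:ℕ))) * c k : ZMod (p ^ (1:ℕ)))).val • b (Fin.last s)
        = -((∑ k, (c k).val * d k) • b (Fin.last s)) := by
      rw [eq_neg_iff_add_eq_zero]
      exact h0
    rw [this, sub_eq_add_neg]
  have extinj : Function.Injective ext := by
    intro c c' h
    funext k
    have := congrFun h k.castSucc
    rwa [hext_cast, hext_cast] at this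
  have hF'inj : Function.Injective ⇑F' := by
    intro c c' h
    rw [← key1, ← key1] at h
    exact extinj (hFinj h)
  have hF'range : Set.range ⇑F' = ((cut B i₀ : AddSubgroup _) : Set _) := by
    apply subset_antisymm
    · rintro x ⟨c, rfl⟩
      rw [SetLike.mem_coe, comboHom_apply]
      exact AddSubgroup.sum_mem _ fun k _ => AddSubgroup.nsmul_mem _ (hb'B k) _
    · intro y hy
      rw [SetLike.mem_coe, mem_cut] at hy
      obtain ⟨hyB, hyi⟩ := hy
      have : y ∈ Set.range ⇑F := by rw [hFr]; exact hyB
      obtain ⟨χ, hχ⟩ := this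
      set c : ∀ _ : Fin s, ZMod (p ^ (1:ℕ)) := fun k => χ k.castSucc with hc
      set m : ZMod (p ^ (1:ℕ)) := χ (Fin.last s) + ∑ k, (d k : ZMod (p ^ (1:ℕ))) * c k with hm
      have hdiff : χ - ext c = Pi.single (Fin.last s) m := by
        funext j
        refine Fin.lastCases ?_ ?_ j
        · rw [Pi.sub_apply, hext_last, Pi.single_eq_same, hm, sub_neg_eq_add]
        · intro k
          rw [Pi.sub_apply, hext_cast,
            Pi.single_eq_of_ne (Fin.castSucc_lt_last k).ne, hc, sub_self]
      have hyF' : y - F' c = m.val • b (Fin.last s) := by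
        rw [← hχ, ← key1, ← map_sub, hdiff, hFsingle]
      have hF'c_mem : F' c ∈ cut B i₀ := by
        rw [hF', comboHom_apply]
        exact AddSubgroup.sum_mem _ fun k _ => AddSubgroup.nsmul_mem _ (hb'B k) _
      have hcoord : (m.val • b (Fin.last s)) i₀ = 0 := by
        rw [← hyF', Pi.sub_apply, hyi, (mem_cut.1 hF'c_mem).2, sub_self]
      have hdvd : p ∣ m.val := by
        have h2 : m.val • (b (Fin.last s) i₀) = 0 := by
          rw [← Pi.smul_apply]; exact hcoord
        have := addOrderOf_dvd_of_nsmul_eq_zero h2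
        rwa [addOrderOf_eq_prime (btori (Fin.last s)) hlast] at this
      have : m.val • b (Fin.last s) = 0 := nsmul_eq_zero_of_dvd (btor (Fin.last s)) hdvd
      rw [this] at hyF'
      exact ⟨c, (sub_eq_zero.mp hyF').symm⟩
  refine ⟨b', ?_, ?_, ?_⟩
  · intro k
    show addOrderOf (b' k) = p ^ (1:ℕ)
    rw [pow_one]
    refine addOrderOf_eq_prime (b'tor k) ?_
    intro hk0
    have h2 : F' (Pi.single k 1) = 0 := by
      rw [comboHom_apply]
      rw [combo_single hp.one_lt (fun _ => le_refl 1) b' k 1, hk0, smul_zero]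
    have := hF'inj (h2.trans (map_zero F').symm)
    have := congrFun this k
    rw [Pi.single_eq_same, Pi.zero_apply] at this
    exact one_ne_zero this
  · rw [hF'fun]; exact hF'inj
  · rw [hF'fun]; exact hF'range

theorem zsh_coord_zero {p r : ℕ} {e : Fin r → ℕ} {i₀ : Fin r} {w : ∀ i, ZMod (p ^ e i)}
    (hw : (p ^ e i₀) • w = 0) (hw0 : w i₀ = 0) (y : ZMod (p ^ e i₀)) :
    zsh (p ^ e i₀) w hw y i₀ = 0 := by
  obtain ⟨k, rfl⟩ := ZMod.intCast_surjective y
  rw [zsh, ZMod.lift_coe, zmultiplesHom_apply, Pi.smul_apply, hw0, smul_zero]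

def theta {p r : ℕ} {e : Fin r → ℕ} (i₀ : Fin r) (w : ∀ i, ZMod (p ^ e i))
    (hw : (p ^ e i₀) • w = 0) (hw0 : w i₀ = 0) :
    (∀ i, ZMod (p ^ e i)) ≃+ (∀ i, ZMod (p ^ e i)) where
  toFun x := x + zsh _ w hw (x i₀)
  invFun x := x - zsh _ w hw (x i₀)
  left_inv x := by
    have h : (x + zsh _ w hw (x i₀)) i₀ = x i₀ := by
      rw [Pi.add_apply, zsh_coord_zero hw hw0, add_zero]
    simp only [h, add_sub_cancel_right]
  right_inv x := by
    have h : (x - zsh _ w hw (x i₀)) i₀ = x i₀ := by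
      rw [Pi.sub_apply, zsh_coord_zero hw hw0, sub_zero]
    simp only [h, sub_add_cancel]
  map_add' x y := by
    simp only [Pi.add_apply, map_add]
    abel

theorem theta_apply {p r : ℕ} {e : Fin r → ℕ} (i₀ : Fin r) (w : ∀ i, ZMod (p ^ e i))
    (hw : (p ^ e i₀) • w = 0) (hw0 : w i₀ = 0) [NeZero (p ^ e i₀)]
    (x : ∀ i, ZMod (p ^ e i)) :
    theta i₀ w hw hw0 x = x + (x i₀).val • w := by
  show x + zsh _ w hw (x i₀) = _
  rw [zsh_apply]

theorem theta_fix {p r : ℕ} {e : Fin r → ℕ} (i₀ : Fin r) (w : ∀ i, ZMod (p ^ e i))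
    (hw : (p ^ e i₀) • w = 0) (hw0 : w i₀ = 0) (x : ∀ i, ZMod (p ^ e i)) (hx : x i₀ = 0) :
    theta i₀ w hw hw0 x = x := by
  show x + zsh _ w hw (x i₀) = x
  rw [hx, map_zero, add_zero]

theorem nsmul_natCast {N : ℕ} (a m : ℕ) : a • ((m : ℕ) : ZMod N) = ((a * m : ℕ) : ZMod N) := by
  rw [nsmul_eq_mul, Nat.cast_mul]

theorem key {p : ℕ} (hp : p.Prime) {r : ℕ} (e : Fin r → ℕ) (he : Antitone e)
    (h1 : ∀ i, 1 ≤ e i) :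
    ∀ (s : ℕ) (B : AddSubgroup (∀ i, ZMod (p ^ e i))) (b : Fin s → ∀ i, ZMod (p ^ e i)),
    IsPBasis p (fun _ => 1) b B → ∀ n : ℕ, (∀ x ∈ B, ∀ i : Fin r, n ≤ (i:ℕ) → x i = 0) →
    ∃ (a : Fin r → ∀ i, ZMod (p ^ e i)) (ι : Fin s → Fin r), StrictMono ι ∧
      (∀ k, (ι k : ℕ) < n) ∧ (∀ i : Fin r, n ≤ (i:ℕ) → a i = Pi.single i 1) ∧
      (∀ j i : Fin r, n ≤ (i:ℕ) → i ≠ j → a j i = 0) ∧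
      IsPBasis p e a ⊤ ∧ IsPBasis p (fun _ => 1) (fun k => p ^ (e (ι k) - 1) • a (ι k)) B := by
  haveI : Fact p.Prime := ⟨hp⟩
  haveI : NeZero p := ⟨hp.pos.ne'⟩
  haveI : Fact (1 < p) := ⟨hp.one_lt⟩
  haveI : Fact (1 < p ^ 1) := ⟨by rw [pow_one]; exact hp.one_lt⟩
  intro s
  induction s with
  | zero =>
    intro B b hb n hBn
    refine ⟨fun i => Pi.single i 1, Fin.elim0, ?_, ?_, fun i _ => rfl,
      fun j i _ hij => Pi.single_eq_of_ne hij 1, isPBasis_single p e, ?_⟩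
    · intro k; exact k.elim0
    · intro k; exact k.elim0
    · obtain ⟨ho, hinj, hr⟩ := hb
      refine ⟨fun k => k.elim0, fun c c' _ => funext fun k => k.elim0, ?_⟩
      rw [← hr]
      congr 1
  | succ s IH =>
    intro B b hb n hBn
    classical
    -- each b k is nonzero
    have hbne : ∀ k, b k ≠ 0 := by
      intro k h0
      have h2 : (1 : ℕ) = p ^ (1:ℕ) := by
        have := hb.1 k
        rw [h0, addOrderOf_zero] at this
        exact this
      rw [pow_one] at h2
      have := hp.one_lt
      omega
    -- the support and its max
    have hSne : (Finset.univ.filter (fun i : Fin r => ∃ k, b k i ≠ 0)).Nonempty := by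
      obtain ⟨i, hi⟩ := Function.ne_iff.mp (hbne 0)
      exact ⟨i, Finset.mem_filter.mpr ⟨Finset.mem_univ i, 0, hi⟩⟩
    set i₀ := (Finset.univ.filter (fun i : Fin r => ∃ k, b k i ≠ 0)).max' hSne with hi₀
    obtain ⟨k₀, hk₀⟩ : ∃ k, b k i₀ ≠ 0 :=
      (Finset.mem_filter.mp ((Finset.univ.filter (fun i : Fin r => ∃ k, b k i ≠ 0)).max'_mem hSne)).2
    have hgt : ∀ i : Fin r, i₀ < i → ∀ k, b k i = 0 := by
      intro i hi k
      by_contra hne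
      have hiS : i ∈ Finset.univ.filter (fun i : Fin r => ∃ k, b k i ≠ 0) :=
        Finset.mem_filter.mpr ⟨Finset.mem_univ i, k, hne⟩
      exact absurd (Finset.le_max' _ i hiS) (not_le.mpr hi)
    have hBgt : ∀ x ∈ B, ∀ i, i₀ < i → x i = 0 := by
      intro x hx i hi
      rw [← SetLike.mem_coe, ← hb.2.2] at hx
      obtain ⟨c, rfl⟩ := hx
      simp only [Finset.sum_apply, Pi.smul_apply]
      exact Finset.sum_eq_zero fun k _ => by rw [hgt i hi k, smul_zero]
    have hi₀n : (i₀ : ℕ) < n := by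
      by_contra hn
      exact hk₀ (hBn (b k₀) (hb.mem hp.one_lt (fun _ => le_refl 1) k₀) i₀ (by omega))
    -- move the pivot basis vector to the last position
    have hb2 := hb.perm (Equiv.swap k₀ (Fin.last s))
    have hb2last : (b ∘ (Equiv.swap k₀ (Fin.last s))) (Fin.last s) i₀ ≠ 0 := by
      rw [Function.comp_apply, Equiv.swap_apply_right]
      exact hk₀
    -- basis of the cut subgroup
    obtain ⟨b', hb'⟩ := subbasis hp h1 B i₀ (b ∘ (Equiv.swap k₀ (Fin.last s))) hb2 hb2last
    have hcutn : ∀ x ∈ cut B i₀, ∀ i : Fin r, (i₀ : ℕ) ≤ (i : ℕ) → x i = 0 := by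
      intro x hx i hi
      rw [mem_cut] at hx
      rcases eq_or_lt_of_le hi with heq | hlt
      · have : i = i₀ := Fin.ext heq.symm
        rw [this]; exact hx.2
      · exact hBgt x hx.1 i (by rwa [Fin.lt_def])
    obtain ⟨a', ι', hmono', hlt', hcol', hrow', ha'top, hβ⟩ := IH (cut B i₀) b' hb' i₀ hcutn
    -- the pivot element and its coordinates
    have hz₀B : b k₀ ∈ B := hb.mem hp.one_lt (fun _ => le_refl 1) k₀
    have hz₀tor : p • b k₀ = 0 := hb.elem_torsion _ hz₀B
    have hz₀i : ∀ i, p • b k₀ i = 0 := fun i => by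
      have := congrFun hz₀tor i
      rwa [Pi.smul_apply, Pi.zero_apply] at this
    choose t ht ht2 using fun i => zmod_ptorsion hp (h1 i) (hz₀i i)
    have hti₀ : t i₀ ≠ 0 := fun h => hk₀ (by rw [ht2 i₀, h, zero_mul, Nat.cast_zero])
    have htp : ((t i₀ : ℕ) : ZMod p) ≠ 0 := by
      rw [Ne, ZMod.natCast_eq_zero_iff]
      intro hdvd
      exact hti₀ (Nat.eq_zero_of_dvd_of_lt hdvd (ht i₀) ▸ rfl)
    set u : ZMod p := ((t i₀ : ℕ) : ZMod p)⁻¹ with hu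
    set d : Fin r → ℕ := fun i => (((t i : ℕ) : ZMod p) * u).val with hdd
    have hd0 : ∀ i, t i = 0 → d i = 0 := fun i hti => by
      show (((t i : ℕ) : ZMod p) * u).val = 0
      rw [hti, Nat.cast_zero, zero_mul, ZMod.val_zero]
    have htgt : ∀ i, i₀ < i → t i = 0 := by
      intro i hi
      have h0 : b k₀ i = 0 := hgt i hi k₀
      rw [ht2 i] at h0
      have hdvd := (ZMod.natCast_eq_zero_iff _ _).1 h0
      have hpe : p ^ e i = p ^ (e i - 1) * p := by
        rw [← pow_succ]
        congr 1
        have := h1 i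
        omega
      have : p ^ (e i - 1) * p ∣ p ^ (e i - 1) * t i := by
        rw [← hpe, mul_comm (p ^ (e i - 1))]
        exact hdvd
      have hpt : p ∣ t i := (mul_dvd_mul_iff_left (pow_ne_zero _ hp.pos.ne')).1 this
      exact Nat.eq_zero_of_dvd_of_lt hpt (ht i) ▸ rfl
    set v : ∀ i, ZMod (p ^ e i) := fun i => ((d i * p ^ (e i - e i₀) : ℕ) : ZMod (p ^ e i))
      with hv
    have hvap : ∀ i, v i = ((d i * p ^ (e i - e i₀) : ℕ) : ZMod (p ^ e i)) := fun _ => rfl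
    have hvi₀ : v i₀ = 1 := by
      rw [hvap i₀]
      have : d i₀ = 1 := by
        show (((t i₀ : ℕ) : ZMod p) * u).val = 1
        rw [hu, mul_inv_cancel₀ htp, ZMod.val_one]
      rw [this, Nat.sub_self, pow_zero, mul_one, Nat.cast_one]
    have hvgt : ∀ i, i₀ < i → v i = 0 := fun i hi => by
      rw [hvap i, hd0 i (htgt i hi), zero_mul, Nat.cast_zero]
    set w : ∀ i, ZMod (p ^ e i) := v - Pi.single i₀ 1 with hw
    have hw0 : w i₀ = 0 := by
      show v i₀ - (Pi.single i₀ 1 : ∀ i, ZMod (p ^ e i)) i₀ = 0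
      rw [hvi₀, Pi.single_eq_same, sub_self]
    have hvtor : p ^ e i₀ • v = 0 := by
      funext i
      rw [Pi.smul_apply, Pi.zero_apply]
      rcases le_or_gt i i₀ with hle | hlt
      · have hee : e i₀ ≤ e i := he hle
        rw [hvap i, nsmul_natCast]
        have hexp : p ^ e i₀ * (d i * p ^ (e i - e i₀)) = d i * p ^ e i := by
          rw [mul_left_comm, ← pow_add]
          congr 2
          omega
        rw [hexp, ZMod.natCast_eq_zero_iff]
        exact dvd_mul_left (p ^ e i) (d i)
      · rw [hvgt i hlt, smul_zero]
    have hstor : p ^ e i₀ • (Pi.single i₀ 1 : ∀ i, ZMod (p ^ e i)) = 0 := by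
      funext i
      rw [Pi.smul_apply, Pi.zero_apply]
      by_cases hii : i = i₀
      · subst hii
        rw [Pi.single_eq_same, nsmul_eq_mul, mul_one, ZMod.natCast_self]
      · rw [Pi.single_eq_of_ne hii, smul_zero]
    have hwtor : p ^ e i₀ • w = 0 := by
      rw [hw, smul_sub, hvtor, hstor, sub_zero]
    haveI : NeZero (p ^ e i₀) := ⟨pow_ne_zero _ hp.pos.ne'⟩
    haveI : Fact (1 < p ^ e i₀) := ⟨Nat.one_lt_pow (by have := h1 i₀; omega) hp.one_lt⟩
    set Θ := theta i₀ w hwtor hw0 with hΘ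
    set a : Fin r → ∀ i, ZMod (p ^ e i) := fun j => Θ (a' j) with ha
    have hfix : ∀ j, j ≠ i₀ → a j = a' j := fun j hj =>
      theta_fix i₀ w hwtor hw0 (a' j) (hrow' j i₀ (le_refl _) (Ne.symm hj))
    have hai₀ : a i₀ = v := by
      show Θ (a' i₀) = v
      rw [hcol' i₀ (le_refl _), hΘ, theta_apply, Pi.single_eq_same, ZMod.val_one, one_smul, hw]
      abel
    set ι : Fin (s+1) → Fin r := Fin.snoc ι' i₀ with hι
    have hι_cast : ∀ k : Fin s, ι k.castSucc = ι' k := fun k => by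
      simp [hι]
    have hι_last : ι (Fin.last s) = i₀ := by
      simp [hι]
    have hι'lt : ∀ k, ι' k < i₀ := fun k => by rw [Fin.lt_def]; exact hlt' k
    set z : ∀ i, ZMod (p ^ e i) := p ^ (e i₀ - 1) • v with hz
    have hzeq : z = u.val • b k₀ := by
      funext i
      rw [hz, Pi.smul_apply, Pi.smul_apply, hvap i, ht2 i, nsmul_natCast, nsmul_natCast,
        ZMod.natCast_eq_natCast_iff]
      rcases le_or_gt i i₀ with hle | hlt
      · have hee : e i₀ ≤ e i := he hle
        have h1i := h1 i₀
        have hexp : p ^ (e i₀ - 1) * (d i * p ^ (e i - e i₀)) = d i * p ^ (e i - 1) := by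
          rw [mul_left_comm, ← pow_add]
          congr 2
          omega
        rw [hexp]
        have hmod : d i ≡ u.val * t i [MOD p] := by
          rw [← ZMod.natCast_eq_natCast_iff, Nat.cast_mul]
          rw [show ((d i : ℕ) : ZMod p) = ((t i : ℕ) : ZMod p) * u from
            ZMod.natCast_rightInverse _,
            show ((u.val : ℕ) : ZMod p) = u from ZMod.natCast_rightInverse _]
          ring
        have := Nat.ModEq.mul_right' (c := p ^ (e i - 1)) hmod
        rw [show p * p ^ (e i - 1) = p ^ e i by rw [← pow_succ']; congr 1; have := h1 i; omega]
          at this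
        calc d i * p ^ (e i - 1) ≡ u.val * t i * p ^ (e i - 1) [MOD p ^ e i] := this
        _ = u.val * (t i * p ^ (e i - 1)) := by ring
      · have htz := htgt i hlt
        rw [hd0 i htz, htz, zero_mul, mul_zero, zero_mul, mul_zero]
    have hzB : z ∈ B := by
      rw [hzeq]
      exact AddSubgroup.nsmul_mem B hz₀B _
    have hz2 : p • z = 0 := by
      rw [hz, smul_smul, show p * p ^ (e i₀ - 1) = p ^ e i₀ by
        rw [← pow_succ']; congr 1; have := h1 i₀; omega, hvtor]
    have hz3 : z i₀ ≠ 0 := by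
      rw [hz, Pi.smul_apply, hvi₀, nsmul_eq_mul, mul_one]
      intro hzero
      have hdvd := (ZMod.natCast_eq_zero_iff _ _).1 hzero
      have hle := Nat.le_of_dvd (pow_pos hp.pos _) hdvd
      have hlt2 : p ^ (e i₀ - 1) < p ^ e i₀ :=
        Nat.pow_lt_pow_right hp.one_lt (by have := h1 i₀; omega)
      omega
    -- conclusions
    refine ⟨a, ι, ?_, ?_, ?_, ?_, ?_, ?_⟩
    · intro k l hkl
      rcases Fin.eq_castSucc_or_eq_last k with ⟨k', rfl⟩ | rfl
      · rcases Fin.eq_castSucc_or_eq_last l with ⟨l', rfl⟩ | rfl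
        · rw [hι_cast, hι_cast]
          exact hmono' (Fin.castSucc_lt_castSucc_iff.mp hkl)
        · rw [hι_cast, hι_last]
          exact hι'lt k'
      · exact absurd hkl (not_lt.mpr (Fin.le_last l))
    · intro k
      rcases Fin.eq_castSucc_or_eq_last k with ⟨k', rfl⟩ | rfl
      · rw [hι_cast]
        have := hlt' k'
        omega
      · rw [hι_last]
        omega
    · intro i hi
      have hne : i ≠ i₀ := fun h => by rw [h] at hi; omega
      rw [hfix i hne]
      exact hcol' i (by omega)
    · intro j i hi hij
      by_cases hji : j = i₀
      · subst hji
        rw [hai₀]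
        exact hvgt i (by rw [Fin.lt_def]; omega)
      · rw [hfix j hji]
        exact hrow' j i (by omega) hij
    · have htop := ha'top.equivMap Θ
      rw [AddSubgroup.map_top_of_surjective _ Θ.surjective] at htop
      exact htop
    · have hsnoc : (fun k => p ^ (e (ι k) - 1) • a (ι k))
          = Fin.snoc (fun k => p ^ (e (ι' k) - 1) • a' (ι' k)) z := by
        funext k
        refine Fin.lastCases ?_ ?_ k
        · show p ^ (e (ι (Fin.last s)) - 1) • a (ι (Fin.last s)) = _
          rw [Fin.snoc_last, hι_last, hai₀, hz]
        · intro k'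
          show p ^ (e (ι k'.castSucc) - 1) • a (ι k'.castSucc) = _
          rw [Fin.snoc_castSucc, hι_cast, hfix (ι' k') (hι'lt k').ne]
      rw [hsnoc]
      exact assemble hp h1 B i₀ _ z hβ hzB hz2 hz3 hb.elem_torsion


theorem stmt5 {p : ℕ} (hp : p.Prime) {A : Type*} [AddCommGroup A] [Fintype A]
    {r : ℕ} (e : Fin r → ℕ) (he : Antitone e) (h1 : ∀ i, 1 ≤ e i)
    (hbasis : ∃ a : Fin r → A, IsPBasis p e a ⊤)
    (B : AddSubgroup A) {s : ℕ}
    (hB : ∃ b : Fin s → A, IsPBasis p (fun _ => 1) b B) :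
    ∃ (a : Fin r → A) (ι : Fin s → Fin r), StrictMono ι ∧ IsPBasis p e a ⊤ ∧
      IsPBasis p (fun _ => 1) (fun k => p ^ (e (ι k) - 1) • a (ι k)) B := by
  haveI : Fact p.Prime := ⟨hp⟩
  haveI : NeZero p := ⟨hp.pos.ne'⟩
  obtain ⟨a₀, ha₀⟩ := hbasis
  have htor : ∀ i, (p ^ e i) • a₀ i = 0 := ha₀.torsion
  set F := comboHom p e a₀ htor with hF
  have hFfun := combo_funeq p htor
  have hFinj : Function.Injective ⇑F := by rw [← hFfun]; exact ha₀.2.1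
  have hFsurj : Function.Surjective ⇑F := by
    have hr : Set.range ⇑F = ((⊤ : AddSubgroup A) : Set A) := by
      rw [← hFfun]; exact ha₀.2.2
    exact Set.range_eq_univ.mp (by rw [hr, AddSubgroup.coe_top])
  set φ : (∀ i, ZMod (p ^ e i)) ≃+ A := AddEquiv.ofBijective F ⟨hFinj, hFsurj⟩ with hφ
  obtain ⟨b, hbB⟩ := hB
  have hbB' := hbB.equivMap φ.symm
  obtain ⟨am, ι, hmono, -, -, -, hamtop, hambasis⟩ :=
    key hp e he h1 s (B.map φ.symm.toAddMonoidHom) (⇑φ.symm ∘ b) hbB' r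
      (fun x _ i hi => absurd i.isLt (not_lt.mpr hi))
  have hBB : (B.map φ.symm.toAddMonoidHom).map φ.toAddMonoidHom = B := by
    ext x
    simp only [AddSubgroup.mem_map, AddEquiv.coe_toAddMonoidHom]
    constructor
    · rintro ⟨y, ⟨z, hz, rfl⟩, rfl⟩
      rwa [AddEquiv.apply_symm_apply]
    · intro hx
      exact ⟨φ.symm x, ⟨x, hx, rfl⟩, AddEquiv.apply_symm_apply φ x⟩
  refine ⟨⇑φ ∘ am, ι, hmono, ?_, ?_⟩
  · have htop := hamtop.equivMap φ
    rwa [AddSubgroup.map_top_of_surjective φ.toAddMonoidHom φ.surjective] at htop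
  · have hbas := hambasis.equivMap φ
    rw [hBB] at hbas
    have hfun : ⇑φ ∘ (fun k => p ^ (e (ι k) - 1) • am (ι k))
        = fun k => p ^ (e (ι k) - 1) • (⇑φ ∘ am) (ι k) :=
      funext fun k => by exact map_nsmul φ.toAddMonoidHom (p ^ (e (ι k) - 1)) (am (ι k))
    rwa [hfun] at hbas
end

section
/- Let G be a finite group and α an automorphism of G such that every α-orbit on G has length at most 3. Then G = C_G(α²) or G = C_G(α³), i.e., α² = id or α³ = id. -/
theorem stmt10 {G : Type*} [Group G] [Finite G] (α : MulAut G)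
    (h : ∀ g : G, Set.ncard (Set.range fun n : ℕ => (α ^ n) g) ≤ 3) :
    α ^ 2 = 1 ∨ α ^ 3 = 1 := by
  have p2 : ∀ x : G, (α ^ 2) x = α (α x) := by
    intro x
    rw [pow_succ, pow_one]
    rfl
  have p3 : ∀ x : G, (α ^ 3) x = α ((α ^ 2) x) := by
    intro x
    rw [pow_succ' α 2]
    rfl
  have key : ∀ g : G, (α ^ 2) g = g ∨ (α ^ 3) g = g := by
    intro g
    by_contra hc
    push_neg at hc
    obtain ⟨h2, h3⟩ := hc
    have e10 : α g ≠ g := by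
      intro he
      exact h2 (by rw [p2, he, he])
    have e20 : (α ^ 2) g ≠ g := h2
    have e30 : (α ^ 3) g ≠ g := h3
    have e21 : (α ^ 2) g ≠ α g := by
      intro he
      rw [p2] at he
      exact e10 (α.injective he)
    have e31 : (α ^ 3) g ≠ α g := by
      intro he
      rw [p3] at he
      exact h2 (α.injective he)
    have e32 : (α ^ 3) g ≠ (α ^ 2) g := by
      intro he
      rw [p3, p2] at he
      exact e10 (α.injective (α.injective he))
    have hsub : ({g, α g, (α ^ 2) g, (α ^ 3) g} : Set G) ⊆
        Set.range fun n : ℕ => (α ^ n) g := by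
      intro x hx
      rcases hx with rfl | rfl | rfl | rfl
      · exact ⟨0, by simp⟩
      · exact ⟨1, by simp⟩
      · exact ⟨2, rfl⟩
      · exact ⟨3, rfl⟩
    have hcard : Set.ncard ({g, α g, (α ^ 2) g, (α ^ 3) g} : Set G) = 4 := by
      rw [Set.ncard_insert_of_notMem (by simp [e10.symm, e20.symm, e30.symm]) (Set.toFinite _),
        Set.ncard_insert_of_notMem (by simp [e21.symm, e31.symm]) (Set.toFinite _),
        Set.ncard_pair e32.symm]
    have hle : Set.ncard ({g, α g, (α ^ 2) g, (α ^ 3) g} : Set G) ≤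
        Set.ncard (Set.range fun n : ℕ => (α ^ n) g) :=
      Set.ncard_le_ncard hsub (Set.toFinite _)
    have := h g
    omega
  by_contra hor
  push_neg at hor
  obtain ⟨hA, hB⟩ := hor
  obtain ⟨a, ha⟩ : ∃ a : G, (α ^ 2) a ≠ a := by
    by_contra hc
    push_neg at hc
    exact hA (MulEquiv.ext fun x => (hc x).trans rfl)
  obtain ⟨b, hb⟩ : ∃ b : G, (α ^ 3) b ≠ b := by
    by_contra hc
    push_neg at hc
    exact hB (MulEquiv.ext fun x => (hc x).trans rfl)
  have ha3 : (α ^ 3) a = a := (key a).resolve_left ha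
  have hb2 : (α ^ 2) b = b := (key b).resolve_right hb
  rcases key (a * b) with hab | hab
  · rw [map_mul, hb2] at hab
    exact ha (mul_right_cancel hab)
  · rw [map_mul, ha3] at hab
    exact hb (mul_left_cancel hab)
end

section
/- Let G be a finite group acting faithfully and transitively on a set Ω, with point stabiliser S = G_ω. An automorphism α of G is induced by conjugation by an element of the normaliser of G in Sym(Ω) if and only if α(S) is a point stabiliser of G (equivalently, α(S) is conjugate in G to S, equivalently α(S) = G_{ω'} for some ω' ∈ Ω). -/
theorem stmt12 {Ω : Type*} [Finite Ω] (G : Subgroup (Equiv.Perm Ω))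
    (htrans : ∀ ω ω' : Ω, ∃ g ∈ G, g ω = ω') (ω : Ω) (α : ↥G ≃* ↥G) :
    (∃ n : Equiv.Perm Ω, ∀ g : ↥G, (↑(α g) : Equiv.Perm Ω) = n * ↑g * n⁻¹) ↔
      ∃ ω' : Ω, (MulAction.stabilizer (↥G) ω).map α.toMonoidHom =
        MulAction.stabilizer (↥G) ω' := by
  have hstab : ∀ (ω₀ : Ω) (g : ↥G),
      g ∈ MulAction.stabilizer (↥G) ω₀ ↔ (g : Equiv.Perm Ω) ω₀ = ω₀ := by
    intro ω₀ g
    rw [MulAction.mem_stabilizer_iff]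
    rfl
  have aux1 : ∀ (ω₀ : Ω) (g h : ↥G),
      ((h⁻¹ * g : ↥G) : Equiv.Perm Ω) ω₀ = ω₀ ↔
        (g : Equiv.Perm Ω) ω₀ = (h : Equiv.Perm Ω) ω₀ := by
    intro ω₀ g h
    simp [Equiv.Perm.mul_apply, Equiv.Perm.inv_def, Equiv.symm_apply_eq]
  constructor
  · rintro ⟨n, hn⟩
    refine ⟨n ω, ?_⟩
    ext g
    simp only [Subgroup.mem_map, hstab]
    constructor
    · rintro ⟨h, hh, rfl⟩
      simp only [MulEquiv.toMonoidHom_eq_coe, MonoidHom.coe_coe]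
      rw [hn]
      simp [Equiv.Perm.mul_apply, hh]
    · intro hg
      refine ⟨α.symm g, ?_, by simp⟩
      have h2 := hn (α.symm g)
      rw [α.apply_symm_apply] at h2
      have : ((α.symm g : ↥G) : Equiv.Perm Ω) = n⁻¹ * ↑g * n := by
        rw [h2]; group
      rw [this]
      simp [Equiv.Perm.mul_apply, hg]
  · rintro ⟨ω', hS⟩
    have hmem : ∀ s : ↥G,
        ((s : Equiv.Perm Ω) ω = ω) ↔ (((α s : ↥G) : Equiv.Perm Ω) ω' = ω') := by
      intro s
      rw [← hstab, ← hstab, ← hS]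
      constructor
      · intro h; exact ⟨s, h, rfl⟩
      · rintro ⟨t, ht, hts⟩
        have : t = s := α.injective hts
        rwa [this] at ht
    have key : ∀ g h : ↥G, (g : Equiv.Perm Ω) ω = (h : Equiv.Perm Ω) ω ↔
        ((α g : ↥G) : Equiv.Perm Ω) ω' = ((α h : ↥G) : Equiv.Perm Ω) ω' := by
      intro g h
      rw [← aux1 ω g h, hmem, map_mul, map_inv, aux1 ω' (α g) (α h)]
    have hrep : ∀ x : Ω, ∃ g : ↥G, (g : Equiv.Perm Ω) ω = x := by
      intro x
      obtain ⟨g, hg, h⟩ := htrans ω x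
      exact ⟨⟨g, hg⟩, h⟩
    have hrep' : ∀ y : Ω, ∃ g : ↥G, (g : Equiv.Perm Ω) ω' = y := by
      intro y
      obtain ⟨g, hg, h⟩ := htrans ω' y
      exact ⟨⟨g, hg⟩, h⟩
    choose r hr using hrep
    choose r' hr' using hrep'
    set nf : Ω → Ω := fun x => ((α (r x) : ↥G) : Equiv.Perm Ω) ω' with hnf
    set mf : Ω → Ω := fun y => ((α.symm (r' y) : ↥G) : Equiv.Perm Ω) ω with hmf
    have hleft : Function.LeftInverse mf nf := by
      intro x
      have h2 : ((α (α.symm (r' (nf x))) : ↥G) : Equiv.Perm Ω) ω' =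
          ((α (r x) : ↥G) : Equiv.Perm Ω) ω' := by
        rw [α.apply_symm_apply]; exact hr' (nf x)
      have h3 := (key _ _).mpr h2
      show ((α.symm (r' (nf x)) : ↥G) : Equiv.Perm Ω) ω = x
      rw [h3, hr]
    have hright : Function.RightInverse mf nf := by
      intro y
      have h1 : ((r (mf y) : ↥G) : Equiv.Perm Ω) ω =
          ((α.symm (r' y) : ↥G) : Equiv.Perm Ω) ω := hr (mf y)
      have h2 := (key _ _).mp h1
      rw [α.apply_symm_apply] at h2
      show ((α (r (mf y)) : ↥G) : Equiv.Perm Ω) ω' = y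
      rw [h2, hr']
    refine ⟨Equiv.mk nf mf hleft hright, ?_⟩
    intro g
    have main : ∀ x : Ω, ((α g : ↥G) : Equiv.Perm Ω) (nf x) = nf ((g : Equiv.Perm Ω) x) := by
      intro x
      have h1 : ((r ((g : Equiv.Perm Ω) x) : ↥G) : Equiv.Perm Ω) ω =
          ((g * r x : ↥G) : Equiv.Perm Ω) ω := by
        rw [hr, Subgroup.coe_mul, Equiv.Perm.mul_apply, hr]
      have h2 := (key _ _).mp h1
      rw [map_mul] at h2
      show ((α g : ↥G) : Equiv.Perm Ω) (((α (r x) : ↥G) : Equiv.Perm Ω) ω') =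
        ((α (r ((g : Equiv.Perm Ω) x)) : ↥G) : Equiv.Perm Ω) ω'
      rw [h2, Subgroup.coe_mul, Equiv.Perm.mul_apply]
    ext x
    simp only [Equiv.Perm.mul_apply]
    have h5 := main ((Equiv.mk nf mf hleft hright)⁻¹ x)
    have hx : nf ((Equiv.mk nf mf hleft hright)⁻¹ x) = x := hright x
    rw [hx] at h5
    rw [h5]
    rfl
end
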